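/- Let A = [[0,0],[1,0]] and B = [[0,1],[0,2]], and for λ ≠ 0 set P(λ) = −λ·I + B·γ((A−B)/λ), where γ(N) = Σ_{k≥0} N^k/(k+1)!. Then det(P(λ)) = e^{−1/λ} · λ · (λ−1); in particular λ = 1 is the unique nonzero root of det(P(λ)) = 0. -/

import Mathlib

attribute [local instance] Matrix.linftyOpNormedRing Matrix.linftyOpNormedAlgebra

/-- γ(N) = Σ_{k≥0} N^k/(k+1)! (which equals ∫₀¹ e^{N·t} dt). -/
noncomputable def matGamma (N : Matrix (Fin 2) (Fin 2) ℝ) : Matrix (Fin 2) (Fin 2) ℝ :=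
  ∑' k : ℕ, (((k + 1).factorial : ℝ))⁻¹ • N ^ k

/-!
Write `x = -1/l`. Then `(A - B)/l = x • (1 + E)` with `E = !![-1, 1; -1, 1]` and `E * E = 0`, so
`((A - B)/l)^k = x^k • (1 + k • E)` and `γ` splits into the two scalar series
`∑ x^k/(k+1)! = (e^x - 1)/x` and `∑ k x^k/(k+1)! = e^x - (e^x - 1)/x`, both read off the
exponential series. This makes `P` an explicit `2 × 2` matrix whose determinant is
`e^x · l · (l - 1)`.
-/

open Nat

lemma one_add_pow_of_mul_self_eq_zero {R : Type*} [Semiring R] {E : R} (hE : E * E = 0)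
    (k : ℕ) : (1 + E) ^ k = 1 + k • E := by
  induction k with
  | zero => simp
  | succ k ih =>
    rw [pow_succ, ih, add_mul, one_mul, smul_mul_assoc, mul_add, mul_one, hE, add_zero, succ_nsmul]
    abel

lemma Real.hasSum_pow_div_factorial (x : ℝ) : HasSum (fun k : ℕ => x ^ k / k !) (Real.exp x) :=
  Real.exp_eq_exp_ℝ ▸ NormedSpace.expSeries_div_hasSum_exp x

lemma Real.hasSum_pow_div_factorial_succ {x : ℝ} (hx : x ≠ 0) :
    HasSum (fun k : ℕ => x ^ k / (k + 1)!) ((Real.exp x - 1) / x) := by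
  have h := (hasSum_nat_add_iff' 1).mpr (Real.hasSum_pow_div_factorial x)
  simp only [Finset.sum_range_one, pow_zero, factorial_zero, cast_one, div_one] at h
  refine (h.div_const x).congr_fun fun k => ?_
  field_simp
  ring

lemma Real.hasSum_nat_mul_pow_div_factorial_succ {x : ℝ} (hx : x ≠ 0) :
    HasSum (fun k : ℕ => k * x ^ k / (k + 1)!) (Real.exp x - (Real.exp x - 1) / x) := by
  refine ((Real.hasSum_pow_div_factorial x).sub
    (Real.hasSum_pow_div_factorial_succ hx)).congr_fun fun k => ?_
  rw [factorial_succ]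
  push_cast
  field_simp
  ring

lemma matGamma_smul_one_add {x : ℝ} (hx : x ≠ 0) {E : Matrix (Fin 2) (Fin 2) ℝ}
    (hE : E * E = 0) :
    matGamma (x • (1 + E)) =
      ((Real.exp x - 1) / x) • 1 + (Real.exp x - (Real.exp x - 1) / x) • E := by
  rw [← (((Real.hasSum_pow_div_factorial_succ hx).smul_const 1).add
    ((Real.hasSum_nat_mul_pow_div_factorial_succ hx).smul_const E)).tsum_eq, matGamma]
  congr 1 with k : 1
  rw [smul_pow, one_add_pow_of_mul_self_eq_zero hE, ← Nat.cast_smul_eq_nsmul ℝ, smul_add,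
    smul_add, smul_smul, smul_smul, smul_smul]
  congr 2 <;> ring

/-- With A = [[0,0],[1,0]], B = [[0,1],[0,2]] and P(λ) = −λ·I + B·γ((A−B)/λ) for λ ≠ 0,
det P(λ) = e^{−1/λ} · λ · (λ−1); in particular λ = 1 is the unique nonzero root. -/
theorem stmt6 (l : ℝ) (hl : l ≠ 0) :
    let A : Matrix (Fin 2) (Fin 2) ℝ := !![0, 0; 1, 0]
    let B : Matrix (Fin 2) (Fin 2) ℝ := !![0, 1; 0, 2]
    let P : Matrix (Fin 2) (Fin 2) ℝ := -(l • 1) + B * matGamma (l⁻¹ • (A - B))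
    P.det = Real.exp (-1 / l) * l * (l - 1) ∧ (P.det = 0 ↔ l = 1) := by
  intro A B P
  set E : Matrix (Fin 2) (Fin 2) ℝ := !![-1, 1; -1, 1]
  have hE : E * E = 0 := by
    ext i j; fin_cases i <;> fin_cases j <;> simp [E]
  have hN : l⁻¹ • (A - B) = (-l⁻¹) • (1 + E) := by
    ext i j; fin_cases i <;> fin_cases j <;> norm_num [A, B, E]
  have hx : -l⁻¹ ≠ 0 := neg_ne_zero.2 (inv_ne_zero hl)
  have hdet : P.det = Real.exp (-1 / l) * l * (l - 1) := by
    rw [show P = -(l • 1) + B * matGamma ((-l⁻¹) • (1 + E)) by rw [← hN],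
      matGamma_smul_one_add hx hE]
    simp only [B, E, Matrix.one_fin_two, Matrix.mul_fin_two, Matrix.smul_of, Matrix.smul_cons,
      Matrix.smul_empty, Matrix.neg_of, Matrix.neg_cons, Matrix.neg_empty, Matrix.of_add_of,
      Matrix.add_cons, Matrix.empty_add_empty, Matrix.head_cons, Matrix.tail_cons, smul_eq_mul,
      Matrix.det_fin_two_of]
    field_simp
    ring
  refine ⟨hdet, ?_⟩
  simp [hdet, Real.exp_ne_zero, hl, sub_eq_zero]
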